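/- arXiv:1511.03762 — 2 statements merged into one kernel-verified Lean document; each statement's English description precedes it below -/
import Mathlib

section
/- Fix integers L ≥ 1 and N ≥ 2 and p, q ∈ ℂ with p + q = 1. Suppose ξ = (ξ_1, …, ξ_N) ∈ ℂ^N has all coordinates nonzero, satisfies p + q ξ_a ξ_b − ξ_b ≠ 0 for all a ≠ b, and is a solution of the Bethe ansatz equations: for every j, ξ_j^L = (−1)^{N−1} ∏_{i=1}^N (p + q ξ_j ξ_i − ξ_j)/(p + q ξ_j ξ_i − ξ_i), where all denominators p + q ξ_j ξ_i − ξ_i are nonzero. Then the Bethe ansatz function u_ξ vanishes identically on ℤ^N (i.e. u_ξ(x) = 0 for all x ∈ ℤ^N) if and only if ξ_i = ξ_j for two distinct indices i and j. -/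
/-- The Bethe amplitude `A_σ(ξ)`: the product over all pairs `a < b` that are
inverted by `σ` (i.e. `σ⁻¹ b < σ⁻¹ a`) of `-(p + q ξ_a ξ_b - ξ_a)/(p + q ξ_a ξ_b - ξ_b)`. -/
noncomputable def betheAmp {N : ℕ} (p q : ℂ) (ξ : Fin N → ℂ)
    (σ : Equiv.Perm (Fin N)) : ℂ :=
  ∏ ab ∈ Finset.univ.filter
      (fun ab : Fin N × Fin N => ab.1 < ab.2 ∧ σ.symm ab.2 < σ.symm ab.1),
    (-((p + q * ξ ab.1 * ξ ab.2 - ξ ab.1) / (p + q * ξ ab.1 * ξ ab.2 - ξ ab.2)))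

/-- The Bethe ansatz function `u_ξ(x) = ∑_{σ ∈ S_N} A_σ(ξ) ∏_k ξ_{σ(k)}^{x_k}`. -/
noncomputable def betheU {N : ℕ} (p q : ℂ) (ξ : Fin N → ℂ) (x : Fin N → ℤ) : ℂ :=
  ∑ σ : Equiv.Perm (Fin N), betheAmp p q ξ σ * ∏ k, ξ (σ k) ^ x k

/-!
Write `n(z, w) = p + q z w - z` and `P(η) = ∏_{k<l} n(η_k, η_l)`. An inverted pair `a < b`
contributes `-n(ξ_a, ξ_b) / n(ξ_b, ξ_a)` to `A_σ`, and comparing `P(ξ ∘ σ)` with `P(ξ)` pair by pair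
gives `A_σ = sgn σ · P(ξ) / P(ξ ∘ σ)`. So `u_ξ(x)` is `P(ξ)` times the alternating sum over `S_N`
of a function of `ξ ∘ σ`, which vanishes as soon as two coordinates of `ξ` coincide.
Conversely, if the `ξ_i` are distinct, the characters `x ↦ ∏_k ξ_{σ k}^{x_k}` of `ℤ^N` are pairwise
distinct, hence linearly independent (Dedekind–Artin), while the coefficient `A_id = 1` is nonzero.
-/

open Finset Equiv Perm

namespace Equiv.Perm

variable {n : ℕ}

theorem sign_eq_signAux (σ : Perm (Fin n)) : sign σ = signAux σ :=
  σ.swap_induction_on (by simp) fun π i j hne h ↦ by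
    rw [sign_mul, signAux_mul, h, sign_swap hne, signAux_swap hne]

theorem prod_finPairsLT_comp {M : Type*} [CommMonoid M] (σ : Perm (Fin n))
    (g : Fin n → Fin n → M) :
    ∏ x ∈ finPairsLT n, g (σ x.2) (σ x.1) =
      ∏ y ∈ finPairsLT n, if σ⁻¹ y.1 < σ⁻¹ y.2 then g y.1 y.2 else g y.2 y.1 := by
  refine prod_nbij (signBijAux σ) signBijAux_mem signBijAux_injOn signBijAux_surj ?_
  rintro ⟨l, k⟩ hkl
  rw [mem_finPairsLT] at hkl
  by_cases h : σ k < σ l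
  · simp [signBijAux, h, hkl.not_gt]
  · simp [signBijAux, h, hkl]

theorem sum_sign_smul_comp_eq_zero {α β M : Type*} [DecidableEq α] [Fintype α]
    [AddCommGroup M] (G : (α → β) → M) {v : α → β} {i j : α} (hij : i ≠ j)
    (hv : v i = v j) : ∑ σ : Perm α, sign σ • G (v ∘ σ) = 0 := by
  refine sum_involution (fun σ _ ↦ swap i j * σ) (fun σ _ ↦ ?_) (fun σ _ _ ↦ ?_)
    (fun _ _ ↦ mem_univ _) (fun σ _ ↦ swap_mul_self_mul i j σ)
  · have hvσ : v ∘ ⇑(swap i j * σ) = v ∘ σ := funext fun k ↦ apply_swap_eq_self hv (σ k)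
    rw [hvσ, sign_mul, sign_swap hij, neg_one_mul, Units.neg_smul, add_neg_cancel]
  · simpa [mul_eq_right] using hij

end Equiv.Perm

section Characters

variable {ι K : Type*} [Fintype ι] [Field K]

noncomputable def prodZPowHom (η : ι → K) (hη : ∀ i, η i ≠ 0) :
    Multiplicative (ι → ℤ) →* K where
  toFun x := ∏ k, η k ^ x.toAdd k
  map_one' := by simp
  map_mul' x y := by simp only [toAdd_mul, Pi.add_apply, zpow_add₀ (hη _), prod_mul_distrib]

theorem prodZPowHom_ofAdd_single [DecidableEq ι] (η : ι → K) (hη : ∀ i, η i ≠ 0) (k : ι) :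
    prodZPowHom η hη (.ofAdd (Pi.single k 1)) = η k := by
  simp [prodZPowHom, Pi.single_apply]

theorem eq_of_prodZPowHom_eq {η η' : ι → K} {hη : ∀ i, η i ≠ 0} {hη' : ∀ i, η' i ≠ 0}
    (h : prodZPowHom η hη = prodZPowHom η' hη') : η = η' := by
  classical
  ext k
  rw [← prodZPowHom_ofAdd_single η hη, ← prodZPowHom_ofAdd_single η' hη', h]

end Characters

section Bethe

variable {N : ℕ} (p q : ℂ)

-- `P(η) = ∏_{k<l} (p + q η_k η_l - η_k)`: `finPairsLT` lists the pair `k < l` as `⟨l, k⟩`.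
noncomputable def betheProd (η : Fin N → ℂ) : ℂ :=
  ∏ x ∈ finPairsLT N, (p + q * η x.2 * η x.1 - η x.2)

theorem betheAmp_eq_prod_finPairsLT (ξ : Fin N → ℂ) (σ : Perm (Fin N)) :
    betheAmp p q ξ σ = ∏ y ∈ finPairsLT N, if σ⁻¹ y.1 < σ⁻¹ y.2 then
      -((p + q * ξ y.2 * ξ y.1 - ξ y.2) / (p + q * ξ y.2 * ξ y.1 - ξ y.1)) else 1 := by
  rw [betheAmp, ← prod_filter]
  refine prod_nbij' (fun ab ↦ ⟨ab.2, ab.1⟩) (fun y ↦ (y.2, y.1)) ?_ ?_ ?_ ?_ ?_ <;>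
    simp [mem_finPairsLT]

theorem betheAmp_one (ξ : Fin N → ℂ) : betheAmp p q ξ 1 = 1 := by
  rw [betheAmp_eq_prod_finPairsLT]
  exact prod_eq_one fun y hy ↦ if_neg (mem_finPairsLT.mp hy).not_gt

variable {p q} {ξ : Fin N → ℂ} (hpair : ∀ a b, a ≠ b → p + q * ξ a * ξ b - ξ b ≠ 0)
include hpair

theorem betheProd_comp_ne_zero (σ : Perm (Fin N)) : betheProd p q (ξ ∘ σ) ≠ 0 := by
  refine prod_ne_zero_iff.mpr fun x hx ↦ ?_
  rw [Function.comp_apply, Function.comp_apply, mul_right_comm]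
  exact hpair _ _ (σ.injective.ne (mem_finPairsLT.mp hx).ne')

theorem betheAmp_mul_betheProd (σ : Perm (Fin N)) :
    betheAmp p q ξ σ * betheProd p q (ξ ∘ σ) = sign σ * betheProd p q ξ := by
  simp only [betheAmp_eq_prod_finPairsLT, betheProd, Function.comp_apply]
  rw [prod_finPairsLT_comp σ (fun a b ↦ p + q * ξ a * ξ b - ξ a), ← prod_mul_distrib,
    sign_eq_signAux, ← signAux_inv, signAux, Units.coe_prod, Int.cast_prod, ← prod_mul_distrib]
  refine prod_congr rfl fun y hy ↦ ?_
  have hy' := mem_finPairsLT.mp hy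
  have hinv : σ⁻¹ y.1 ≤ σ⁻¹ y.2 ↔ σ⁻¹ y.1 < σ⁻¹ y.2 := (σ⁻¹.injective.ne hy'.ne').le_iff_lt
  have hden := hpair y.2 y.1 hy'.ne
  simp only [hinv]
  split_ifs
  · push_cast
    field_simp
  · simp

theorem betheU_eq_mul_sum_sign (x : Fin N → ℤ) :
    betheU p q ξ x = betheProd p q ξ *
      ∑ σ : Perm (Fin N), sign σ • ((∏ k, (ξ ∘ σ) k ^ x k) / betheProd p q (ξ ∘ σ)) := by
  rw [betheU, mul_sum]
  refine sum_congr rfl fun σ _ ↦ ?_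
  rw [eq_div_of_mul_eq (betheProd_comp_ne_zero hpair σ) (betheAmp_mul_betheProd hpair σ),
    Units.smul_def, zsmul_eq_mul]
  simp only [Function.comp_apply]
  ring

theorem betheU_eq_zero_of_eq {i j : Fin N} (hij : i ≠ j) (hξ : ξ i = ξ j) (x : Fin N → ℤ) :
    betheU p q ξ x = 0 := by
  rw [betheU_eq_mul_sum_sign hpair,
    sum_sign_smul_comp_eq_zero (fun η ↦ (∏ k, η k ^ x k) / betheProd p q η) hij hξ, mul_zero]

end Bethe

theorem exists_betheU_ne_zero {N : ℕ} (p q : ℂ) {ξ : Fin N → ℂ} (hnz : ∀ i, ξ i ≠ 0)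
    (hinj : Function.Injective ξ) : ∃ x, betheU p q ξ x ≠ 0 := by
  by_contra! h
  let χ : Perm (Fin N) → Multiplicative (Fin N → ℤ) →* ℂ :=
    fun σ ↦ prodZPowHom (ξ ∘ σ) (fun k ↦ hnz (σ k))
  have hχ : Function.Injective χ := fun σ τ hστ ↦
    Equiv.ext fun k ↦ hinj (congrFun (eq_of_prodZPowHom_eq hστ) k)
  have hsum : ∑ σ, betheAmp p q ξ σ • ⇑(χ σ) = 0 := funext fun m ↦ by
    simpa [χ, prodZPowHom, betheU] using h m.toAdd
  have h1 := Fintype.linearIndependent_iff.mp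
    ((linearIndependent_monoidHom _ ℂ).comp χ hχ) _ hsum 1
  exact one_ne_zero (betheAmp_one p q ξ ▸ h1)

theorem betheU_eq_zero_iff_coincidence_general (N : ℕ)
    (p q : ℂ) (ξ : Fin N → ℂ)
    (hnz : ∀ i, ξ i ≠ 0)
    (hpair : ∀ a b, a ≠ b → p + q * ξ a * ξ b - ξ b ≠ 0) :
    (∀ x : Fin N → ℤ, betheU p q ξ x = 0) ↔ ∃ i j, i ≠ j ∧ ξ i = ξ j := by
  refine ⟨fun h ↦ ?_, fun ⟨i, j, hij, hξ⟩ ↦ betheU_eq_zero_of_eq hpair hij hξ⟩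
  by_contra! hinj
  obtain ⟨x, hx⟩ := exists_betheU_ne_zero p q hnz fun i j ↦ not_imp_not.mp (hinj i j)
  exact hx (h x)

/-- **Classification of inadmissible Bethe ansatz solutions.**
For a solution `ξ` of the Bethe ansatz equations with all coordinates nonzero and
all denominators nonzero, the Bethe ansatz function `u_ξ` vanishes identically on
`ℤ^N` if and only if two of the coordinates of `ξ` coincide. -/
theorem betheU_eq_zero_iff_coincidence (L N : ℕ) (hL : 1 ≤ L) (hN : 2 ≤ N)
    (p q : ℂ) (hpq : p + q = 1) (ξ : Fin N → ℂ)
    (hnz : ∀ i, ξ i ≠ 0)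
    (hpair : ∀ a b, a ≠ b → p + q * ξ a * ξ b - ξ b ≠ 0)
    (hden : ∀ j i, p + q * ξ j * ξ i - ξ i ≠ 0)
    (hbethe : ∀ j, ξ j ^ L = (-1) ^ (N - 1) *
      ∏ i, (p + q * ξ j * ξ i - ξ j) / (p + q * ξ j * ξ i - ξ i)) :
    (∀ x : Fin N → ℤ, betheU p q ξ x = 0) ↔ ∃ i j, i ≠ j ∧ ξ i = ξ j :=
  betheU_eq_zero_iff_coincidence_general N p q ξ hnz hpair
end

section
/- Let ξ_1, ξ_2 ∈ ℂ \ {0} and A, c ∈ ℂ. If ξ_1^{x_1} ξ_2^{x_2} + A · ξ_1^{x_2} ξ_2^{x_1} = c for all integers x_1, x_2 ∈ ℤ (integer powers of the nonzero complex numbers ξ_1, ξ_2), then ξ_1 = ξ_2. -/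
/-!
Comparing the values at `(1, 0)` and `(0, 1)` gives `(ξ₁ - ξ₂) (1 - A) = 0`. When `A = 1`
the values at `(0, 0)`, `(1, 0)` and `(1, 1)` say `ξ₁ + ξ₂ = 2` and `ξ₁ ξ₂ = 1`, so `ξ₁` and
`ξ₂` are both the double root `1` of `t² - 2t + 1`.
-/

theorem eq_of_two_term_sum_const_on_unit_square {R : Type*} [CommRing R] [NoZeroDivisors R]
    {a b A c : R} (h₀₀ : 1 + A = c) (h₁₀ : a + A * b = c) (h₀₁ : b + A * a = c)
    (h₁₁ : a * b + A * (a * b) = c) : a = b := by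
  have hfactor : (a - b) * (1 - A) = 0 := by linear_combination h₁₀ - h₀₁
  rcases mul_eq_zero.mp hfactor with hab | hA
  · exact sub_eq_zero.mp hab
  · obtain rfl : A = 1 := by linear_combination -hA
    have hsq : (a - b) ^ 2 = 0 := by linear_combination (a + b + c) * h₁₀ - 2 * h₁₁ - c * h₀₀
    exact sub_eq_zero.mp (pow_eq_zero_iff two_ne_zero |>.mp hsq)

theorem two_term_exponential_constant_general (ξ₁ ξ₂ : ℂ)
    (A c : ℂ)
    (h : ∀ x₁ x₂ : ℤ, ξ₁ ^ x₁ * ξ₂ ^ x₂ + A * (ξ₁ ^ x₂ * ξ₂ ^ x₁) = c) :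
    ξ₁ = ξ₂ :=
  eq_of_two_term_sum_const_on_unit_square (by simpa using h 0 0) (by simpa using h 1 0)
    (by simpa using h 0 1) (by simpa using h 1 1)

/-- **Two-particle key step.** If the two-term exponential sum
`ξ₁^{x₁} ξ₂^{x₂} + A ξ₁^{x₂} ξ₂^{x₁}` (integer powers of nonzero complex numbers)
is constant in `(x₁, x₂) ∈ ℤ²`, then `ξ₁ = ξ₂`. -/
theorem two_term_exponential_constant (ξ₁ ξ₂ : ℂ) (h₁ : ξ₁ ≠ 0) (h₂ : ξ₂ ≠ 0)
    (A c : ℂ)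
    (h : ∀ x₁ x₂ : ℤ, ξ₁ ^ x₁ * ξ₂ ^ x₂ + A * (ξ₁ ^ x₂ * ξ₂ ^ x₁) = c) :
    ξ₁ = ξ₂ :=
  two_term_exponential_constant_general ξ₁ ξ₂ A c h
end
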